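/- Let L, P, N_s be positive natural numbers, s : Fin N_s → (Fin L → ℝ), and C : Matrix (Fin P) (Fin P) ℝ. For each r ∈ Fin L let G_r, H_r : Matrix (Fin P) (Fin L) ℝ be matrices all of whose entries outside column r vanish, and set D = Σ_r G_r and D' = Σ_r H_r. Define F : Matrix (Fin L) (Fin L) ℝ by F r k = Σ_{t} ⟪G_r.mulVec (s t), C.mulVec (H_k.mulVec (s t))⟫. Then F = Matrix.hadamard S_s (Dᵀ * C * D'), where S_s : Matrix (Fin L) (Fin L) ℝ has entries (S_s) r k = Σ_t (s t r) * (s t k). -/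

import Mathlib

/-!
A matrix supported in its `r`-th column acts on `v` as `v r` times that column, so each summand
of `F r k` factors as `s(t)_r s(t)_k ⟪(G r)ᵀ r, C (H k)ᵀ k⟫`. Since the `r`-th column of `Σ G` is
the `r`-th column of `G r` (and likewise for `H`), the bilinear factor is the `(r, k)` entry of
`(Σ G)ᵀ C (Σ H)`.
-/

open Matrix

namespace Matrix

variable {m n ι R : Type*}

theorem mulVec_eq_smul_col_of_col_support [CommSemiring R] [Fintype n] {A : Matrix m n R} {r : n}
    (hA : ∀ i j, j ≠ r → A i j = 0) (v : n → R) : A *ᵥ v = v r • Aᵀ r := by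
  ext i
  rw [mulVec, dotProduct, Finset.sum_eq_single r (fun j _ hj => by rw [hA i j hj, zero_mul])
    (fun h => absurd (Finset.mem_univ r) h)]
  exact mul_comm _ _

theorem transpose_sum_apply_of_col_support [AddCommMonoid R] [Fintype ι] {G : ι → Matrix m ι R}
    (hG : ∀ r i j, j ≠ r → G r i j = 0) (r : ι) : (∑ r', G r')ᵀ r = (G r)ᵀ r := by
  ext i
  rw [transpose_apply, sum_apply, Finset.sum_eq_single r (fun r' _ hr' => hG r' i r hr'.symm)
    (fun h => absurd (Finset.mem_univ r) h)]
  rfl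

theorem transpose_mul_mul_apply [NonUnitalSemiring R] [Fintype m] (A B : Matrix m n R) (C : Matrix m m R) (r k : n) :
    (Aᵀ * C * B) r k = Aᵀ r ⬝ᵥ C *ᵥ Bᵀ k := by
  rw [dotProduct_mulVec]
  rfl

end Matrix

theorem stmt_11_general (L P Ns : ℕ)
    (s : Fin Ns → Fin L → ℝ)
    (C : Matrix (Fin P) (Fin P) ℝ)
    (G H : Fin L → Matrix (Fin P) (Fin L) ℝ)
    (hG : ∀ r : Fin L, ∀ (i : Fin P) (j : Fin L), j ≠ r → G r i j = 0)
    (hH : ∀ r : Fin L, ∀ (i : Fin P) (j : Fin L), j ≠ r → H r i j = 0) :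
    (Matrix.of fun r k : Fin L =>
        ∑ t : Fin Ns, ((G r).mulVec (s t)) ⬝ᵥ C.mulVec ((H k).mulVec (s t)))
      = Matrix.hadamard
          (Matrix.of fun r k : Fin L => ∑ t : Fin Ns, s t r * s t k)
          ((∑ r : Fin L, G r)ᵀ * C * (∑ r : Fin L, H r)) := by
  ext r k
  rw [of_apply, hadamard_apply, of_apply, transpose_mul_mul_apply,
    transpose_sum_apply_of_col_support hG, transpose_sum_apply_of_col_support hH, Finset.sum_mul]
  refine Finset.sum_congr rfl fun t _ => ?_
  rw [mulVec_eq_smul_col_of_col_support (hG r), mulVec_eq_smul_col_of_col_support (hH k),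
    mulVec_smul, smul_dotProduct, dotProduct_smul, smul_eq_mul, smul_eq_mul, ← mul_assoc]

/-- Theorem 1's Fisher-information block formula (combining eqs. (43)–(45)):
if each `G r` and `H r` is a `P × L` matrix supported in its `r`-th column,
`D = Σ_r G r`, `D' = Σ_r H r`, then the matrix with entries
`F r k = Σ_t ⟪(G r) s(t), C (H k) s(t)⟫` equals the Hadamard product
`S_s ⊙ (Dᵀ C D')`, where `(S_s) r k = Σ_t s(t)_r s(t)_k`. -/
theorem stmt_11 (L P Ns : ℕ) (hL : 0 < L) (hP : 0 < P) (hNs : 0 < Ns)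
    (s : Fin Ns → Fin L → ℝ)
    (C : Matrix (Fin P) (Fin P) ℝ)
    (G H : Fin L → Matrix (Fin P) (Fin L) ℝ)
    (hG : ∀ r : Fin L, ∀ (i : Fin P) (j : Fin L), j ≠ r → G r i j = 0)
    (hH : ∀ r : Fin L, ∀ (i : Fin P) (j : Fin L), j ≠ r → H r i j = 0) :
    (Matrix.of fun r k : Fin L =>
        ∑ t : Fin Ns, ((G r).mulVec (s t)) ⬝ᵥ C.mulVec ((H k).mulVec (s t)))
      = Matrix.hadamard
          (Matrix.of fun r k : Fin L => ∑ t : Fin Ns, s t r * s t k)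
          ((∑ r : Fin L, G r)ᵀ * C * (∑ r : Fin L, H r)) :=
  stmt_11_general L P Ns s C G H hG hH
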